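/- arXiv:math/0309152 — 3 statements merged into one kernel-verified Lean document; each statement's English description precedes it below -/
import Mathlib

section
/- Let m ≥ 1 be odd, let k ≥ 1, let t : ℤ/2^k → Aut(ℤ/m) be a group homomorphism, and let G = ℤ/m ⋊_t ℤ/2^k be the corresponding semidirect product (a 2-hyperelementary periodic group of type I). Then G has a non-central element of order two if and only if t is injective (i.e., ker t = {1}). -/
/-!
Write an involution of `ℤ/m ⋊_t ℤ/2^k` as `g = (a, b)`. If `t b = 1`, then `g² = 1` gives
`a² = 1`, so `a = 1` because `m` is odd, and `g = (1, b)` is central. Hence a non-central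
involution has `t b ≠ 1`, and `b` is then the unique involution of the cyclic `2`-group
`ℤ/2^k`, which lies in every nontrivial subgroup, in particular in `ker t` if it were nontrivial.
Conversely, if `t` is injective, `(1, b)` is a non-central involution.
-/

open Subgroup

theorem eq_one_of_mul_self_eq_one_of_odd_card {G : Type*} [Group G] (hG : Odd (Nat.card G))
    {a : G} (ha : a * a = 1) : a = 1 :=
  (Nat.Coprime.pow_left_bijective (Nat.coprime_two_right.mpr hG)).injective
    (by rw [sq, ha, one_pow] : a ^ 2 = 1 ^ 2)

theorem IsCyclic.eq_of_orderOf_eq_two {G : Type*} [Group G] [IsCyclic G] [Finite G] {a b : G}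
    (ha : orderOf a = 2) (hb : orderOf b = 2) : a = b := by
  have := Fintype.ofFinite G
  have hcard := IsCyclic.card_orderOf_eq_totient (α := G) (ha ▸ orderOf_dvd_card)
  rw [Nat.totient_two] at hcard
  exact Finset.card_le_one.mp hcard.le a (by simpa using ha) b (by simpa using hb)

theorem IsPGroup.exists_pow_eq_of_orderOf_eq_two {G : Type*} [Group G] [IsCyclic G] [Finite G]
    (hG : IsPGroup 2 G) {z b : G} (hz : z ≠ 1) (hb : orderOf b = 2) : ∃ n : ℕ, z ^ n = b :=
  ⟨orderOf z / 2, IsCyclic.eq_of_orderOf_eq_two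
    (orderOf_pow_orderOf_div (orderOf_pos z).ne' (hG.dvd_orderOf hz)) hb⟩

namespace SemidirectProduct

variable {N G : Type*} [Group N] [Group G] {φ : G →* MulAut N}

theorem inr_mem_center_iff {g : G} :
    (inr g : N ⋊[φ] G) ∈ center (N ⋊[φ] G) ↔ φ g = 1 ∧ g ∈ center G := by
  simp only [mem_center_iff]
  constructor
  · intro h
    refine ⟨MulEquiv.ext fun n => ?_, fun g' => inr_injective (by simpa using h (inr g'))⟩
    simpa using (congrArg left (h (inl n))).symm
  · rintro ⟨hφ, hg⟩ x
    ext
    · simp [hφ]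
    · simp [hg x.right]

theorem eq_inr_of_mul_self_eq_one (hN : Odd (Nat.card N)) {x : N ⋊[φ] G} (hx : x * x = 1)
    (hφ : φ x.right = 1) : x = inr x.right := by
  have hleft : x.left * x.left = 1 := by simpa [hφ] using congrArg left hx
  ext
  · simpa using eq_one_of_mul_self_eq_one_of_odd_card hN hleft
  · rfl

end SemidirectProduct

open SemidirectProduct in
/-- A 2-hyperelementary periodic group of type I, i.e. a semidirect product
`G = ℤ/m ⋊_t ℤ/2^k` with `m` odd, has a non-central element of order two if and only
if the twisting homomorphism `t` is injective (i.e. `ker t = {1}`). -/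
theorem noncentral_involution_iff_twist_injective
    (m k : ℕ) (hm : Odd m) (hk : 1 ≤ k)
    (t : Multiplicative (ZMod (2 ^ k)) →* MulAut (Multiplicative (ZMod m))) :
    (∃ g : Multiplicative (ZMod m) ⋊[t] Multiplicative (ZMod (2 ^ k)),
        g ∉ Subgroup.center (Multiplicative (ZMod m) ⋊[t] Multiplicative (ZMod (2 ^ k))) ∧
        orderOf g = 2) ↔
      Function.Injective t := by
  have hoddN : Odd (Nat.card (Multiplicative (ZMod m))) := (Nat.card_zmod m).symm ▸ hm
  have hcardC : Nat.card (Multiplicative (ZMod (2 ^ k))) = 2 ^ k := Nat.card_zmod _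
  have hcentral (b : Multiplicative (ZMod (2 ^ k))) :
      (inr b : Multiplicative (ZMod m) ⋊[t] _) ∈ center _ ↔ t b = 1 := by
    simp [inr_mem_center_iff, CommGroup.center_eq_top]
  constructor
  · rintro ⟨g, hg_noncentral, hg_order⟩
    have htb : t g.right ≠ 1 := fun htb => hg_noncentral <| by
      have hg_sq : g * g = 1 := by
        rw [← sq]; exact orderOf_dvd_iff_pow_eq_one.mp (dvd_of_eq hg_order)
      rw [eq_inr_of_mul_self_eq_one hoddN hg_sq htb]
      exact (hcentral _).mpr htb
    have hb : orderOf g.right = 2 := by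
      have hdvd : orderOf g.right ∣ 2 := (orderOf_map_dvd rightHom g).trans (dvd_of_eq hg_order)
      exact orderOf_eq_prime (orderOf_dvd_iff_pow_eq_one.mp hdvd) fun h => htb (by rw [h, map_one])
    rw [injective_iff_map_eq_one]
    intro z hz
    by_contra hz1
    obtain ⟨n, hn⟩ := (IsPGroup.of_card hcardC).exists_pow_eq_of_orderOf_eq_two hz1 hb
    exact htb (by rw [← hn, map_pow, hz, one_pow])
  · intro ht
    obtain ⟨b, hb⟩ := exists_prime_orderOf_dvd_card' 2 (hcardC ▸ dvd_pow_self 2 (by omega))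
    refine ⟨inr b, fun h => ?_, (orderOf_injective inr inr_injective b).trans hb⟩
    have hb1 : b = 1 := ht (((hcentral b).mp h).trans (map_one t).symm)
    simp [hb1] at hb
end

section
/- Let m > 1 be odd, let k ≥ 1, let t : ℤ/2^k → Aut(ℤ/m) be an injective group homomorphism, and let G = ℤ/m ⋊_t ℤ/2^k be the corresponding generalized dihedral group. Then G admits no fixed-point free orthogonal representation: for every finite-dimensional real inner product space V with dim V ≥ 1 and every group homomorphism ρ from G to the group of linear isometries of V, there exist an element g ≠ 1 of G and a unit vector v ∈ V with ρ(g)(v) = v. In particular, the induced action of G on the unit sphere of V is never free. -/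
lemma aux_invol_fix_or_neg {V : Type} [NormedAddCommGroup V] [InnerProductSpace ℝ V]
    (A : V ≃ₗᵢ[ℝ] V) (hA : ∀ v, A (A v) = v) :
    (∃ v : V, ‖v‖ = 1 ∧ A v = v) ∨ ∀ v, A v = -v := by
  by_cases h : ∀ v, A v = -v
  · exact Or.inr h
  · push_neg at h
    obtain ⟨v, hv⟩ := h
    set w := v + A v with hwdef
    have hw : w ≠ 0 := by
      intro h0
      exact hv (eq_neg_of_add_eq_zero_right h0)
    have hAw : A w = w := by
      rw [hwdef, map_add, hA, add_comm]
    refine Or.inl ⟨‖w‖⁻¹ • w, norm_smul_inv_norm hw, ?_⟩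
    rw [map_smul, hAw]

/-- A generalized dihedral group `G = D(m, 2^k) = ℤ/m ⋊_t ℤ/2^k` (with `m > 1` odd and
`t` injective) admits no fixed-point free orthogonal representation: for every
finite-dimensional real inner product space `V` of dimension at least one and every
orthogonal representation `ρ` of `G` on `V`, some non-identity element of `G` fixes a
unit vector of `V`. -/
theorem generalized_dihedral_no_fixed_point_free_orthogonal_rep
    (m k : ℕ) (hm : Odd m) (hm1 : 1 < m) (hk : 1 ≤ k)
    (t : Multiplicative (ZMod (2 ^ k)) →* MulAut (Multiplicative (ZMod m)))
    (ht : Function.Injective t)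
    (V : Type) [NormedAddCommGroup V] [InnerProductSpace ℝ V] [FiniteDimensional ℝ V]
    (hV : 1 ≤ Module.finrank ℝ V)
    (ρ : (Multiplicative (ZMod m) ⋊[t] Multiplicative (ZMod (2 ^ k))) →* (V ≃ₗᵢ[ℝ] V)) :
    ∃ (g : Multiplicative (ZMod m) ⋊[t] Multiplicative (ZMod (2 ^ k))) (v : V),
      g ≠ 1 ∧ ‖v‖ = 1 ∧ ρ g v = v := by
  haveI : NeZero (2 ^ k) := ⟨by positivity⟩
  -- the involution a = 2^(k-1) in ℤ/2^k
  set a : Multiplicative (ZMod (2 ^ k)) :=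
    Multiplicative.ofAdd ((2 ^ (k - 1) : ℕ) : ZMod (2 ^ k)) with hadef
  have hpow : 2 ^ (k - 1) + 2 ^ (k - 1) = 2 ^ k := by
    rw [← two_mul, ← pow_succ']
    congr 1
    omega
  have ha2 : a * a = 1 := by
    rw [hadef, ← ofAdd_add, ← Nat.cast_add, hpow, ZMod.natCast_self]
    rfl
  have ha1 : a ≠ 1 := by
    rw [hadef]
    intro h
    have h0 : ((2 ^ (k - 1) : ℕ) : ZMod (2 ^ k)) = 0 := h
    rw [ZMod.natCast_eq_zero_iff] at h0
    have hle := Nat.le_of_dvd (by positivity) h0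
    have hlt : 2 ^ (k - 1) < 2 ^ k := Nat.pow_lt_pow_right one_lt_two (by omega)
    omega
  have hta : t a ≠ 1 := fun h => ha1 (ht (h.trans (map_one t).symm))
  obtain ⟨x, hx⟩ : ∃ x, t a x ≠ x := by
    by_contra h
    push_neg at h
    exact hta (MulEquiv.ext h)
  have htt : ∀ y, t a (t a y) = y := by
    intro y
    have : t a * t a = 1 := by rw [← map_mul, ha2, map_one]
    have := congrArg (fun f : MulAut (Multiplicative (ZMod m)) => f y) this
    simpa using this
  set j1 : Multiplicative (ZMod m) ⋊[t] Multiplicative (ZMod (2 ^ k)) := ⟨1, a⟩ with hj1def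
  set j2 : Multiplicative (ZMod m) ⋊[t] Multiplicative (ZMod (2 ^ k)) :=
    ⟨x * (t a x)⁻¹, a⟩ with hj2def
  have hj1sq : j1 * j1 = 1 := by
    ext
    · simp [hj1def, SemidirectProduct.mul_left]
    · simp [hj1def, SemidirectProduct.mul_right, ha2]
  have hj2sq : j2 * j2 = 1 := by
    ext
    · simp only [hj2def, SemidirectProduct.mul_left, map_mul, map_inv, htt,
        SemidirectProduct.one_left]
      group
    · simp [hj2def, SemidirectProduct.mul_right, ha2]
  have hj1j2 : j1 * j2 ≠ 1 := by
    intro h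
    have hleft := congrArg SemidirectProduct.left h
    simp only [hj1def, hj2def, SemidirectProduct.mul_left, map_mul, map_inv, htt, one_mul,
      SemidirectProduct.one_left] at hleft
    apply hx
    have : t a x = x := by
      have := mul_inv_eq_one.mp hleft
      exact this
    exact this
  have hj1ne : j1 ≠ 1 := by
    intro h
    exact ha1 (congrArg SemidirectProduct.right h)
  have hj2ne : j2 ≠ 1 := by
    intro h
    exact ha1 (congrArg SemidirectProduct.right h)
  have hρsq : ∀ (j : Multiplicative (ZMod m) ⋊[t] Multiplicative (ZMod (2 ^ k))),
      j * j = 1 → ∀ v, ρ j (ρ j v) = v := by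
    intro j hj v
    have : ρ j * ρ j = 1 := by rw [← map_mul, hj, map_one]
    have := congrArg (fun f : V ≃ₗᵢ[ℝ] V => f v) this
    simpa using this
  rcases aux_invol_fix_or_neg (ρ j1) (hρsq j1 hj1sq) with ⟨v, hv1, hv2⟩ | hneg1
  · exact ⟨j1, v, hj1ne, hv1, hv2⟩
  rcases aux_invol_fix_or_neg (ρ j2) (hρsq j2 hj2sq) with ⟨v, hv1, hv2⟩ | hneg2
  · exact ⟨j2, v, hj2ne, hv1, hv2⟩
  -- both act as -Id, so j1*j2 acts as Id and is nontrivial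
  have : Nontrivial V := by
    rw [← Module.finrank_pos_iff (R := ℝ)]
    omega
  obtain ⟨v, hv⟩ := exists_ne (0 : V)
  refine ⟨j1 * j2, ‖v‖⁻¹ • v, hj1j2, norm_smul_inv_norm hv, ?_⟩
  rw [map_mul]
  have : ∀ u : V, (ρ j1 * ρ j2) u = u := by
    intro u
    have h1 : (ρ j1 * ρ j2) u = ρ j1 (ρ j2 u) := rfl
    rw [h1, hneg2, hneg1, neg_neg]
  exact this _
end

section
/- Let G be a finite group such that every subgroup of G of order p², for p a prime, is cyclic (i.e., G has periodic Tate cohomology). Then the following are equivalent: (a) every element of order two in G is central; (b) for every prime p, every subgroup of G of order 2p is cyclic (the 2p-conditions); (c) G contains no subgroup isomorphic to a dihedral group of order 2p for any odd prime p. -/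
section Aux

variable {G : Type} [Group G]

/-- Given `a` of order `n`, an involution `t` inverting `a` with `t ∉ ⟨a⟩`, we get an
injective homomorphism from the dihedral group of order `2n`. -/
lemma dihedral_hom_aux {n : ℕ} (hn : n ≠ 0) (a t : G)
    (ha : orderOf a = n) (ht : orderOf t = 2) (hrel : t * a * t = a⁻¹)
    (htz : t ∉ Subgroup.zpowers a) :
    ∃ f : DihedralGroup n →* G, Function.Injective f := by
  haveI : NeZero n := ⟨hn⟩
  have ht2 : t * t = 1 := by
    have := pow_orderOf_eq_one t
    rwa [ht, pow_two] at this
  have htinv : t⁻¹ = t := by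
    rw [inv_eq_iff_mul_eq_one]; exact ht2
  -- conjugation by t inverts powers of a
  have hT : ∀ m : ℕ, t * a ^ m * t = (a ^ m)⁻¹ := by
    intro m
    have : (t * a * t⁻¹) ^ m = t * a ^ m * t⁻¹ := conj_pow
    rw [htinv] at this
    rw [← this, hrel, inv_pow]
  -- additivity of exponents in `ZMod n`
  have hA : ∀ i j : ZMod n, a ^ (i + j).val = a ^ i.val * a ^ j.val := by
    intro i j
    rw [← pow_add, pow_eq_pow_iff_modEq, ha, ZMod.val_add]
    exact Nat.mod_modEq _ _
  have hcomm : ∀ i j : ZMod n, a ^ i.val * a ^ j.val = a ^ j.val * a ^ i.val := by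
    intro i j; rw [← pow_add, ← pow_add, Nat.add_comm]
  have hkey : ∀ i j : ZMod n, a ^ (j - i).val = (a ^ i.val)⁻¹ * a ^ j.val := by
    intro i j
    have h1 : a ^ (j - i).val * a ^ i.val = a ^ j.val := by
      rw [← hA, sub_add_cancel]
    rw [eq_inv_mul_iff_mul_eq, ← h1, hcomm]
  have hmove : ∀ i : ZMod n, a ^ i.val * t = t * (a ^ i.val)⁻¹ := by
    intro i
    have := hT i.val
    calc a ^ i.val * t = t * (t * a ^ i.val * t) := by
          rw [← mul_assoc, ← mul_assoc, ht2, one_mul]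
      _ = t * (a ^ i.val)⁻¹ := by rw [this]
  refine ⟨MonoidHom.mk' (fun x => match x with
    | DihedralGroup.r i => a ^ i.val
    | DihedralGroup.sr i => t * a ^ i.val) ?_, ?_⟩
  · rintro (i | i) (j | j)
    · show a ^ (i + j).val = a ^ i.val * a ^ j.val
      exact hA i j
    · show t * a ^ (j - i).val = a ^ i.val * (t * a ^ j.val)
      rw [hkey, ← mul_assoc, ← hmove, mul_assoc]
    · show t * a ^ (i + j).val = t * a ^ i.val * a ^ j.val
      rw [hA, mul_assoc]
    · show a ^ (j - i).val = t * a ^ i.val * (t * a ^ j.val)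
      rw [hkey]
      have : t * a ^ i.val * (t * a ^ j.val) = (t * a ^ i.val * t) * a ^ j.val := by
        group
      rw [this, hT]
  · rw [injective_iff_map_eq_one]
    rintro (i | i) h
    · show DihedralGroup.r i = 1
      have hi : a ^ i.val = 1 := h
      have hd : orderOf a ∣ i.val := orderOf_dvd_of_pow_eq_one hi
      have : n ∣ i.val := ha ▸ hd
      have hv : i.val = 0 := Nat.eq_zero_of_dvd_of_lt this (ZMod.val_lt i)
      have : i = 0 := (ZMod.val_eq_zero i).mp hv
      rw [this, DihedralGroup.one_def]
    · exfalso
      have hi : t * a ^ i.val = 1 := h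
      have : t = (a ^ i.val)⁻¹ := by
        rw [eq_inv_iff_mul_eq_one]; exact hi
      apply htz
      rw [this]
      exact (Subgroup.zpowers a).inv_mem
        ((Subgroup.zpowers a).pow_mem (Subgroup.mem_zpowers a) _)

end Aux

/-- Two commuting involutions coincide in a group satisfying the `p²`-conditions. -/
lemma klein_aux {G : Type} [Group G] [Finite G]
    (hper : ∀ p : ℕ, p.Prime → ∀ H : Subgroup G, Nat.card H = p ^ 2 → IsCyclic H)
    {t z : G} (ht : orderOf t = 2) (hz : orderOf z = 2) (hc : t * z = z * t) : t = z := by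
  by_contra hne
  have ht1 : t ≠ 1 := by
    intro h; rw [h, orderOf_one] at ht; norm_num at ht
  have ht2 : t * t = 1 := by
    have := pow_orderOf_eq_one t; rwa [ht, pow_two] at this
  have hz2 : z * z = 1 := by
    have := pow_orderOf_eq_one z; rwa [hz, pow_two] at this
  have hzinv : z⁻¹ = z := by rw [inv_eq_iff_mul_eq_one]; exact hz2
  have hrel : t * z * t = z⁻¹ := by
    rw [hzinv, hc, mul_assoc, ht2, mul_one]
  have htz : t ∉ Subgroup.zpowers z := by
    intro hmem
    obtain ⟨k, hk⟩ := Subgroup.mem_zpowers_iff.mp hmem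
    have hz2' : z ^ (2 : ℤ) = 1 := by rw [zpow_two]; exact hz2
    have hzk : z ^ k = z ^ (k % 2) := by
      conv_lhs => rw [← Int.mul_ediv_add_emod k 2]
      rw [zpow_add, zpow_mul, hz2', one_zpow, one_mul]
    rcases Int.emod_two_eq_zero_or_one k with h | h
    · rw [hzk, h, zpow_zero] at hk; exact ht1 hk.symm
    · rw [hzk, h, zpow_one] at hk; exact hne hk.symm
  obtain ⟨f, hf⟩ := dihedral_hom_aux two_ne_zero z t hz ht hrel htz
  have e := MonoidHom.ofInjective hf
  have hcard : Nat.card f.range = 2 ^ 2 := by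
    rw [← Nat.card_congr e.toEquiv, DihedralGroup.nat_card]
    norm_num
  haveI := hper 2 Nat.prime_two f.range hcard
  have hcy : IsCyclic (DihedralGroup 2) := isCyclic_of_surjective e.symm e.symm.surjective
  exact IsKleinFour.not_isCyclic hcy

/-- For a finite group `G` with periodic Tate cohomology (every subgroup of order `p²`
is cyclic), the following are equivalent: (a) every element of order two is central;
(b) every subgroup of order `2p`, `p` prime, is cyclic (the `2p`-conditions);
(c) `G` has no subgroup isomorphic to a dihedral group of order `2p`, `p` an odd
prime. -/
theorem periodic_group_central_involution_tfae
    (G : Type) [Group G] [Finite G]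
    (hper : ∀ p : ℕ, p.Prime → ∀ H : Subgroup G, Nat.card H = p ^ 2 → IsCyclic H) :
    List.TFAE
      [∀ g : G, orderOf g = 2 → g ∈ Subgroup.center G,
        ∀ p : ℕ, p.Prime → ∀ H : Subgroup G, Nat.card H = 2 * p → IsCyclic H,
        ¬∃ p : ℕ, p.Prime ∧ Odd p ∧
          ∃ H : Subgroup G, Nonempty (H ≃* DihedralGroup p)] := by
  have hg2of : ∀ g : G, orderOf g = 2 → g * g = 1 := by
    intro g hg
    have := pow_orderOf_eq_one g; rwa [hg, pow_two] at this
  tfae_have 1 → 2 := by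
    intro h1 p hp H hH
    by_cases hp2 : p = 2
    · exact hper 2 Nat.prime_two H (by rw [hH, hp2]; norm_num)
    · have hodd : Odd p := hp.odd_of_ne_two hp2
      haveI : Fact p.Prime := ⟨hp⟩
      haveI : Fact (Nat.Prime 2) := ⟨Nat.prime_two⟩
      have hpd : p ∣ Nat.card H := by rw [hH]; exact dvd_mul_left p 2
      have h2d : 2 ∣ Nat.card H := by rw [hH]; exact dvd_mul_right 2 p
      obtain ⟨y, hy⟩ := exists_prime_orderOf_dvd_card' (G := H) p hpd
      obtain ⟨s, hs⟩ := exists_prime_orderOf_dvd_card' (G := H) 2 h2d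
      have hsG : orderOf (s : G) = 2 := by rw [Subgroup.orderOf_coe]; exact hs
      have hcent := h1 (s : G) hsG
      have hcomm : Commute s y := by
        have h := (Subgroup.mem_center_iff.mp hcent) (y : G)
        exact Subtype.ext (by push_cast; exact h.symm)
      have hco : Nat.Coprime (orderOf s) (orderOf y) := by
        rw [hs, hy]
        exact (Nat.coprime_primes Nat.prime_two hp).mpr (Ne.symm hp2)
      have hord := hcomm.orderOf_mul_eq_mul_orderOf_of_coprime hco
      exact isCyclic_of_orderOf_eq_card (s * y) (by rw [hord, hs, hy, hH])
  tfae_have 2 → 3 := by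
    rintro h2 ⟨p, hp, hodd, H, ⟨e⟩⟩
    haveI : NeZero p := ⟨hp.ne_zero⟩
    have hcard : Nat.card H = 2 * p := by
      rw [Nat.card_congr e.toEquiv, DihedralGroup.nat_card]
    haveI := h2 p hp H hcard
    have hcy : IsCyclic (DihedralGroup p) := isCyclic_of_surjective e e.surjective
    obtain ⟨c, hc⟩ := hcy.exists_generator
    obtain ⟨k1, hk1⟩ := Subgroup.mem_zpowers_iff.mp (hc (DihedralGroup.sr 0))
    obtain ⟨k2, hk2⟩ := Subgroup.mem_zpowers_iff.mp (hc (DihedralGroup.r 1))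
    have hmc : (DihedralGroup.sr 0 : DihedralGroup p) * DihedralGroup.r 1
        = DihedralGroup.r 1 * DihedralGroup.sr 0 := by
      rw [← hk1, ← hk2, ← zpow_add, ← zpow_add, add_comm]
    rw [DihedralGroup.sr_mul_r, DihedralGroup.r_mul_sr] at hmc
    have h11 : (0 + 1 : ZMod p) = 0 - 1 := by injection hmc
    have hp0 : ((2 : ℕ) : ZMod p) = 0 := by push_cast; linear_combination h11
    have hdvd : p ∣ 2 := (ZMod.natCast_eq_zero_iff 2 p).mp hp0
    have := (Nat.prime_dvd_prime_iff_eq hp Nat.prime_two).mp hdvd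
    rw [this] at hodd
    norm_num [Nat.odd_iff] at hodd
  tfae_have 3 → 1 := by
    intro h3 g hg
    by_contra hng
    rw [Subgroup.mem_center_iff] at hng
    push_neg at hng
    obtain ⟨w, hw⟩ := hng
    have hg2 : g * g = 1 := hg2of g hg
    have hginv : g⁻¹ = g := by rw [inv_eq_iff_mul_eq_one]; exact hg2
    have hg1 : g ≠ 1 := by
      intro h; rw [h, orderOf_one] at hg; norm_num at hg
    have ht'2 : orderOf (w * g * w⁻¹) = 2 := by
      haveI : Fact (Nat.Prime 2) := ⟨Nat.prime_two⟩
      refine orderOf_eq_prime ?_ ?_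
      · rw [conj_pow, pow_two, hg2, mul_one, mul_inv_cancel]
      · intro h
        exact hg1 (by
          have := congrArg (fun u => w⁻¹ * u * w) h
          simpa [mul_assoc] using this)
    have hne : w * g * w⁻¹ ≠ g := by
      intro h
      apply hw
      have h2 := congrArg (fun u => u * w) h
      simpa [mul_assoc] using h2
    have ht'inv : (w * g * w⁻¹)⁻¹ = w * g * w⁻¹ := by
      rw [inv_eq_iff_mul_eq_one]; exact hg2of _ ht'2
    have hx1 : g * (w * g * w⁻¹) ≠ 1 := by
      intro h
      rw [mul_eq_one_iff_eq_inv, ht'inv] at h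
      exact hne h.symm
    set x := g * (w * g * w⁻¹) with hxdef
    have hconj : g * x * g = x⁻¹ := by
      rw [hxdef, mul_inv_rev, ht'inv, hginv, ← mul_assoc, ← mul_assoc, hg2, one_mul]
    have hGx : ∀ m : ℕ, g * x ^ m * g = (x ^ m)⁻¹ := by
      intro m
      have h := conj_pow (a := g) (b := x) (i := m)
      rw [hginv] at h
      rw [← h, hconj, inv_pow]
    have hn0 : orderOf x ≠ 0 := (orderOf_pos x).ne'
    have hn1 : orderOf x ≠ 1 := fun h => hx1 (orderOf_eq_one_iff.mp h)
    by_cases h2n : 2 ∣ orderOf x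
    · -- even order: produces two commuting involutions, contradiction
      have hzord : orderOf (x ^ (orderOf x / 2)) = 2 := by
        rw [orderOf_pow, Nat.gcd_eq_right (Nat.div_dvd_of_dvd h2n),
          Nat.div_div_self h2n hn0]
      have hzinv : (x ^ (orderOf x / 2))⁻¹ = x ^ (orderOf x / 2) := by
        rw [inv_eq_iff_mul_eq_one]; exact hg2of _ hzord
      have hgz : g * x ^ (orderOf x / 2) = x ^ (orderOf x / 2) * g := by
        have h1 := hGx (orderOf x / 2)
        rw [hzinv] at h1
        calc g * x ^ (orderOf x / 2)
            = g * x ^ (orderOf x / 2) * g * g := by rw [mul_assoc _ g g, hg2, mul_one]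
          _ = x ^ (orderOf x / 2) * g := by rw [h1]
      have heq : g = x ^ (orderOf x / 2) := klein_aux hper hg hzord hgz
      have hgx : g * x = x * g := by
        rw [heq, ← pow_succ', ← pow_succ]
      have hxx : x⁻¹ = x := by
        rw [← hconj, hgx, mul_assoc, hg2, mul_one]
      have hx2 : x ^ 2 = 1 := by
        rw [pow_two]
        nth_rw 1 [← hxx]
        exact inv_mul_cancel x
      have hnd : orderOf x ∣ 2 := orderOf_dvd_of_pow_eq_one hx2
      have hn2 : orderOf x = 2 := by
        rcases (Nat.dvd_prime Nat.prime_two).mp hnd with h | h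
        · exact absurd h hn1
        · exact h
      have hgeqx : g = x := by
        rw [heq, hn2]
        norm_num
      have : w * g * w⁻¹ = 1 := by
        have := hgeqx
        rw [hxdef] at this
        calc w * g * w⁻¹ = g⁻¹ * (g * (w * g * w⁻¹)) := by group
          _ = g⁻¹ * g := by rw [← this]
          _ = 1 := inv_mul_cancel g
      rw [this, orderOf_one] at ht'2
      norm_num at ht'2
    · -- odd order: dihedral subgroup exists, contradicting h3
      have hp : (orderOf x).minFac.Prime := Nat.minFac_prime hn1
      have hpd : (orderOf x).minFac ∣ orderOf x := Nat.minFac_dvd _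
      have hpodd : Odd (orderOf x).minFac :=
        hp.odd_of_ne_two (fun h => h2n (h ▸ hpd))
      have haord : orderOf (x ^ (orderOf x / (orderOf x).minFac)) = (orderOf x).minFac := by
        rw [orderOf_pow, Nat.gcd_eq_right (Nat.div_dvd_of_dvd hpd),
          Nat.div_div_self hpd hn0]
      have hrel : g * x ^ (orderOf x / (orderOf x).minFac) * g
          = (x ^ (orderOf x / (orderOf x).minFac))⁻¹ := hGx _
      have htz : g ∉ Subgroup.zpowers (x ^ (orderOf x / (orderOf x).minFac)) := by
        intro hmem
        have hdc : orderOf g ∣ Nat.card (Subgroup.zpowers (x ^ (orderOf x / (orderOf x).minFac))) :=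
          Subgroup.orderOf_dvd_natCard _ hmem
        rw [Nat.card_zpowers, haord, hg] at hdc
        rw [Nat.odd_iff] at hpodd
        omega
      obtain ⟨f, hf⟩ := dihedral_hom_aux hp.ne_zero _ g haord hg hrel htz
      exact h3 ⟨(orderOf x).minFac, hp, hpodd, f.range, ⟨(MonoidHom.ofInjective hf).symm⟩⟩
  tfae_finish
end
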